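/- arXiv:1811.03682 — 2 statements merged into one kernel-verified Lean document; each statement's English description precedes it below -/
import Mathlib

section
/- Let $A = \bigoplus_{e \ge 0} A_e$ be a (possibly noncommutative) graded ring. Let $G_e$ be the subring of $A$ generated by homogeneous elements of degree at most $e$, and let $k_e$ be the minimal number of homogeneous generators of $G_e$. Then $k_e - k_{e-1}$, the minimal number of new degree-$e$ generators, is bounded above by the minimal number of generators of $A_e$ as a left $A_0$-module, and also by the minimal number of generators of $A_e$ as a right $A_0$-module. -/
open scoped DirectSum

variable {A : Type*} [Ring A]

/-- The subring of a graded ring generated by the homogeneous elements of degree ≤ `e`. -/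
def gradedPiecesSubring (𝒜 : ℕ → AddSubgroup A) (e : ℕ) : Subring A :=
  Subring.closure {x | ∃ i ≤ e, x ∈ 𝒜 i}

/-- `k_e`: the minimal number of homogeneous generators of `G_e`, as an extended natural. -/
noncomputable def kGen (𝒜 : ℕ → AddSubgroup A) (e : ℕ) : ℕ∞ :=
  sInf {N : ℕ∞ | ∃ S : Finset A, (S.card : ℕ∞) = N ∧ (∀ x ∈ S, ∃ i, x ∈ 𝒜 i) ∧
    Subring.closure (S : Set A) = gradedPiecesSubring 𝒜 e}

/-- Minimal number of generators of `A_e` as a left `A_0`-module. -/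
noncomputable def muLeft (𝒜 : ℕ → AddSubgroup A) (e : ℕ) : ℕ∞ :=
  sInf {N : ℕ∞ | ∃ S : Finset A, (S.card : ℕ∞) = N ∧ (S : Set A) ⊆ 𝒜 e ∧
    ∀ x ∈ 𝒜 e, x ∈ AddSubgroup.closure {y | ∃ a ∈ 𝒜 0, ∃ s ∈ S, y = a * s}}

/-- Minimal number of generators of `A_e` as a right `A_0`-module. -/
noncomputable def muRight (𝒜 : ℕ → AddSubgroup A) (e : ℕ) : ℕ∞ :=
  sInf {N : ℕ∞ | ∃ S : Finset A, (S.card : ℕ∞) = N ∧ (S : Set A) ⊆ 𝒜 e ∧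
    ∀ x ∈ 𝒜 e, x ∈ AddSubgroup.closure {y | ∃ a ∈ 𝒜 0, ∃ s ∈ S, y = s * a}}

/-
If `T` generates `G_{e-1}` and `S` generates `A_e` as a one-sided
`A_0`-module, then `S ∪ T` generates `G_e`, because `A_0 ⊆ G_{e-1}`. Hence
`k_e ≤ #S + k_{e-1}`, and taking `S` (resp. `T`) of minimal size gives the bound.
-/

lemma le_sInf_card_add {α : Type*} {P : Finset α → Prop} {x y : ℕ∞}
    (h : ∀ S, P S → x ≤ S.card + y) :
    x ≤ sInf {N : ℕ∞ | ∃ S : Finset α, (S.card : ℕ∞) = N ∧ P S} + y := by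
  rcases Set.eq_empty_or_nonempty {N : ℕ∞ | ∃ S : Finset α, (S.card : ℕ∞) = N ∧ P S}
    with hempty | hne
  · simp [hempty]
  · obtain ⟨S, hS, hPS⟩ := csInf_mem hne
    exact hS ▸ h S hPS

namespace gradedPiecesSubring

variable (𝒜 : ℕ → AddSubgroup A)

lemma mono : Monotone (gradedPiecesSubring 𝒜) := fun _ _ hef =>
  Subring.closure_mono fun _ ⟨i, hi, hx⟩ => ⟨i, hi.trans hef, hx⟩

lemma piece_subset {i e : ℕ} (hi : i ≤ e) : (𝒜 i : Set A) ⊆ gradedPiecesSubring 𝒜 e :=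
  fun _ hx => Subring.subset_closure ⟨i, hi, hx⟩

lemma le_of_le_of_piece_subset {e : ℕ} {R : Subring A}
    (hprev : gradedPiecesSubring 𝒜 (e - 1) ≤ R) (htop : (𝒜 e : Set A) ⊆ R) :
    gradedPiecesSubring 𝒜 e ≤ R := by
  refine Subring.closure_le.2 fun _ ⟨i, hi, hx⟩ => ?_
  rcases hi.lt_or_eq with hlt | rfl
  · exact hprev (piece_subset 𝒜 (by omega) hx)
  · exact htop hx

lemma closure_union_eq {e : ℕ} {S T : Set A} (hS : S ⊆ 𝒜 e)
    (hT : Subring.closure T = gradedPiecesSubring 𝒜 (e - 1))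
    (hgen : (𝒜 e : Set A) ⊆ Subring.closure (S ∪ 𝒜 0)) :
    Subring.closure (S ∪ T) = gradedPiecesSubring 𝒜 e := by
  have hprev : gradedPiecesSubring 𝒜 (e - 1) ≤ Subring.closure (S ∪ T) :=
    hT ▸ Subring.closure_mono Set.subset_union_right
  apply le_antisymm
  · refine Subring.closure_le.2 (Set.union_subset (hS.trans (piece_subset 𝒜 le_rfl)) ?_)
    exact (Subring.subset_closure.trans hT.le).trans (mono 𝒜 (Nat.sub_le e 1))
  · refine le_of_le_of_piece_subset 𝒜 hprev (hgen.trans (Subring.closure_le.2 ?_))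
    exact Set.union_subset (Subring.subset_closure.trans (Subring.closure_mono
      Set.subset_union_left)) ((piece_subset 𝒜 (Nat.zero_le _)).trans hprev)

end gradedPiecesSubring

section

variable (𝒜 : ℕ → AddSubgroup A)

lemma kGen_le_card {e : ℕ} (S : Finset A) (hS : ∀ x ∈ S, ∃ i, x ∈ 𝒜 i)
    (hcl : Subring.closure (S : Set A) = gradedPiecesSubring 𝒜 e) :
    kGen 𝒜 e ≤ S.card :=
  sInf_le ⟨S, rfl, hS, hcl⟩

lemma kGen_le_card_add_kGen_sub_one {e : ℕ} (S : Finset A) (hS : (S : Set A) ⊆ 𝒜 e)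
    (hgen : (𝒜 e : Set A) ⊆ Subring.closure ((S : Set A) ∪ 𝒜 0)) :
    kGen 𝒜 e ≤ S.card + kGen 𝒜 (e - 1) := by
  classical
  rw [add_comm]
  refine le_sInf_card_add fun T ⟨hT, hTcl⟩ => ?_
  calc kGen 𝒜 e ≤ (T ∪ S).card := by
        refine kGen_le_card 𝒜 _ (fun x hx => ?_) ?_
        · rcases Finset.mem_union.1 hx with hx | hx
          exacts [hT x hx, ⟨e, hS hx⟩]
        · rw [Finset.coe_union, Set.union_comm]
          exact gradedPiecesSubring.closure_union_eq 𝒜 hS hTcl hgen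
    _ ≤ T.card + S.card := by exact_mod_cast Finset.card_union_le T S

end

theorem stmt9_general (𝒜 : ℕ → AddSubgroup A) (e : ℕ) :
    kGen 𝒜 e - kGen 𝒜 (e - 1) ≤ muLeft 𝒜 e ∧
    kGen 𝒜 e - kGen 𝒜 (e - 1) ≤ muRight 𝒜 e := by
  have hS {S : Set A} : S ⊆ Subring.closure (S ∪ 𝒜 0) :=
    Subring.subset_closure.trans' Set.subset_union_left
  have hA₀ {S : Set A} : (𝒜 0 : Set A) ⊆ Subring.closure (S ∪ 𝒜 0) :=
    Subring.subset_closure.trans' Set.subset_union_right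
  constructor <;> refine tsub_le_iff_right.2 (le_sInf_card_add fun S ⟨hSe, hgen⟩ =>
    kGen_le_card_add_kGen_sub_one 𝒜 S hSe fun x hx =>
      (AddSubgroup.closure_le (Subring.closure _).toAddSubgroup).2 ?_ (hgen x hx))
  · rintro _ ⟨a, ha, s, hs, rfl⟩
    exact Subring.mul_mem _ (hA₀ ha) (hS hs)
  · rintro _ ⟨a, ha, s, hs, rfl⟩
    exact Subring.mul_mem _ (hS hs) (hA₀ ha)

/-- For a (possibly noncommutative) graded ring `A = ⊕ A_e`, the number
`k_e - k_{e-1}` of new degree-`e` generators is bounded by the minimal number of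
generators of `A_e` as a left `A_0`-module, and likewise as a right `A_0`-module. -/
theorem stmt9 (𝒜 : ℕ → AddSubgroup A) [GradedRing 𝒜] (e : ℕ) (he : 1 ≤ e) :
    kGen 𝒜 e - kGen 𝒜 (e - 1) ≤ muLeft 𝒜 e ∧
    kGen 𝒜 e - kGen 𝒜 (e - 1) ≤ muRight 𝒜 e :=
  stmt9_general 𝒜 e
end

section
/- Let $S = k[x_1,\ldots,x_n]_{(x_1,\ldots,x_n)}$ with $k$ an $F$-finite field of characteristic $p$, $I \subseteq S$ an ideal, $R = S/I$, $\mathfrak{m}$ the maximal ideal of $S$, and $\mathcal{D}$ a Cartier subalgebra of $R$ with associated ideals $J_e^{\mathcal{D}} \supseteq I^{[p^e]}$ (so that $\Psi(J_e^{\mathcal{D}}/I^{[p^e]}) = \mathcal{D}_e$ under Fedder's isomorphism). Set $\mathcal{D}_{e,l} = \{\phi \in \mathcal{D}_e : \phi({}^e R) \subseteq \mathfrak{m}^l R\}$. Then $\Psi\big(((\mathfrak{m}^l)^{[p^e]} \cap J_e^{\mathcal{D}} + I^{[p^e]})/I^{[p^e]}\big) = \mathcal{D}_{e,l}$. -/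
/-! Write `q = pᵉ` and `S` for the local ring. Since `S` is a localization of a polynomial ring
over an `F`-finite field, its `q`-th power Frobenius has a finite dual basis:
`x = ∑ ψᵢ(x)^q bᵢ` with each `ψᵢ` `p⁻ᵉ`-linear. As `Tr` generates all `p⁻ᵉ`-linear maps,
`Tr(s S) ⊆ a` holds iff `s ∈ a^[q]`. So `Tr(s -)` lands in `𝔪ˡ R` iff
`s ∈ (𝔪ˡ + I)^[q] = (𝔪ˡ)^[q] + I^[q]`, and for `s ∈ J ⊇ I^[q]` the modular law turns this
into `s ∈ (𝔪ˡ)^[q] ∩ J + I^[q]`. -/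

/-- `ψ ∈ Hom_R(ᵉR, R)` when `q = pᵉ`. -/
def IsCartierLinear {R : Type*} [CommRing R] (q : ℕ) (ψ : R →+ R) : Prop :=
  ∀ r x, ψ (r ^ q * x) = r * ψ x

/-- The dual basis criterion for `R` to be finitely generated projective over itself via
`x ↦ x ^ q`. -/
def HasFrobeniusDualBasis (R : Type*) [CommRing R] (q : ℕ) : Prop :=
  ∃ (ι : Type) (_ : Fintype ι) (ψ : ι → R →+ R) (b : ι → R),
    (∀ i, IsCartierLinear q (ψ i)) ∧ ∀ x, x = ∑ i, ψ i x ^ q * b i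

def Ideal.frobeniusPow {R : Type*} [CommRing R] (q : ℕ) (a : Ideal R) : Ideal R :=
  Ideal.span ((fun x => x ^ q) '' (a : Set R))

section FrobeniusPow

variable {R : Type*} [CommRing R]

theorem Ideal.frobeniusPow_sup (p e : ℕ) [ExpChar R p] (a b : Ideal R) :
    (a ⊔ b).frobeniusPow (p ^ e) = a.frobeniusPow (p ^ e) ⊔ b.frobeniusPow (p ^ e) := by
  refine le_antisymm (Ideal.span_le.2 ?_)
    (sup_le (Ideal.span_mono (Set.image_mono fun _ => Ideal.mem_sup_left))
      (Ideal.span_mono (Set.image_mono fun _ => Ideal.mem_sup_right)))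
  rintro _ ⟨y, hy, rfl⟩
  obtain ⟨y₁, hy₁, y₂, hy₂, rfl⟩ := Submodule.mem_sup.1 hy
  change (y₁ + y₂) ^ p ^ e ∈ _
  rw [add_pow_expChar_pow]
  exact add_mem (Ideal.mem_sup_left (Ideal.subset_span ⟨y₁, hy₁, rfl⟩))
    (Ideal.mem_sup_right (Ideal.subset_span ⟨y₂, hy₂, rfl⟩))

theorem IsCartierLinear.map_mul_mem {q : ℕ} {ψ : R →+ R} (hψ : IsCartierLinear q ψ)
    {a : Ideal R} {t : R} (ht : t ∈ a.frobeniusPow q) (x : R) : ψ (t * x) ∈ a := by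
  induction ht using Submodule.span_induction generalizing x with
  | mem _ hy =>
    obtain ⟨y, hy, rfl⟩ := hy
    rw [hψ]
    exact a.mul_mem_right _ hy
  | zero => simp
  | add _ _ _ _ h₁ h₂ => simpa only [add_mul, map_add] using add_mem (h₁ x) (h₂ x)
  | smul r _ _ h => simpa only [smul_eq_mul, mul_assoc, mul_left_comm r] using h (r * x)

theorem HasFrobeniusDualBasis.mem_frobeniusPow {q : ℕ} (hR : HasFrobeniusDualBasis R q)
    {a : Ideal R} {s : R} (hs : ∀ ψ, IsCartierLinear q ψ → ψ s ∈ a) : s ∈ a.frobeniusPow q := by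
  obtain ⟨ι, _, ψ, b, hψ, hb⟩ := hR
  rw [hb s]
  exact Ideal.sum_mem _ fun i _ =>
    Ideal.mul_mem_right _ _ (Ideal.subset_span ⟨ψ i s, hs _ (hψ i), rfl⟩)

theorem mem_frobeniusPow_iff_forall_mul_mem {q : ℕ} (hR : HasFrobeniusDualBasis R q)
    {Tr : R →+ R} (hTr : IsCartierLinear q Tr)
    (hTrGen : ∀ ψ : R →+ R, IsCartierLinear q ψ → ∃ u, ∀ x, ψ x = Tr (u * x))
    {a : Ideal R} {s : R} : s ∈ a.frobeniusPow q ↔ ∀ x, Tr (s * x) ∈ a := by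
  refine ⟨hTr.map_mul_mem, fun hs => hR.mem_frobeniusPow fun ψ hψ => ?_⟩
  obtain ⟨u, hu⟩ := hTrGen ψ hψ
  rw [hu, mul_comm]
  exact hs u

end FrobeniusPow

theorem RingHom.Finite.iterateFrobenius {R : Type*} [CommRing R] {p : ℕ} [ExpChar R p]
    (h : (frobenius R p).Finite) (e : ℕ) : (iterateFrobenius R p e).Finite := by
  induction e with
  | zero => rw [iterateFrobenius_zero]; exact .id R
  | succ m ih => rw [iterateFrobenius_add, iterateFrobenius_one]; exact ih.comp h

namespace HasFrobeniusDualBasis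

theorem of_ringEquiv {R R' : Type*} [CommRing R] [CommRing R'] {q : ℕ} (f : R ≃+* R')
    (h : HasFrobeniusDualBasis R q) : HasFrobeniusDualBasis R' q := by
  obtain ⟨ι, _, ψ, b, hψ, hb⟩ := h
  refine ⟨ι, ‹_›, fun i => (f : R →+* R').toAddMonoidHom.comp
      ((ψ i).comp (f.symm : R' →+* R).toAddMonoidHom), fun i => f (b i), fun i r x => ?_,
    fun x => ?_⟩
  · simp [hψ i (f.symm r)]
  · conv_lhs => rw [← f.apply_symm_apply x, hb (f.symm x)]
    simp

theorem of_field {k : Type*} [Field k] {p : ℕ} [ExpChar k p] (hk : (frobenius k p).Finite)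
    (e : ℕ) : HasFrobeniusDualBasis k (p ^ e) := by
  set Fe := iterateFrobenius k p e
  let φ := Fe.rangeRestrictFieldEquiv
  have : Module.Finite Fe.fieldRange k := by
    rw [← RingHom.finite_algebraMap]
    exact RingHom.Finite.of_comp_finite (f := (φ : k →+* Fe.fieldRange))
      (hk.iterateFrobenius e)
  let B := Module.finBasis Fe.fieldRange k
  have hφ : ∀ r, (φ r : k) = r ^ p ^ e := fun r => rfl
  refine ⟨_, inferInstance, fun j => (φ.symm : Fe.fieldRange →+* k).toAddMonoidHom.comp
      (B.coord j).toAddMonoidHom, B, fun j r x => ?_, fun x => ?_⟩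
  · have : r ^ p ^ e * x = φ r • x := by rw [Subfield.smul_def, hφ, smul_eq_mul]
    simp [this]
  · conv_lhs => rw [← B.sum_repr x]
    refine Finset.sum_congr rfl fun j _ => ?_
    simp [Subfield.smul_def, ← hφ]

end HasFrobeniusDualBasis

section Polynomial

open Polynomial

namespace Polynomial

variable {R : Type*} [CommRing R]

/-- `monomial (n * q + t) a ↦ monomial n (ψ a)`, killing the monomials of degree `≢ t [MOD q]`. -/
noncomputable def powContract (q t : ℕ) (ψ : R →+ R) : R[X] →+ R[X] where
  toFun f := f.sum fun m a => if m % q = t then monomial (m / q) (ψ a) else 0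
  map_zero' := sum_zero_index _
  map_add' f g := sum_add_index f g _ (fun _ => by split <;> simp)
    (fun _ _ _ => by split <;> simp)

theorem powContract_monomial (q t : ℕ) (ψ : R →+ R) (m : ℕ) (a : R) :
    powContract q t ψ (monomial m a) = if m % q = t then monomial (m / q) (ψ a) else 0 :=
  sum_monomial_index (n := m) a (fun m a => if m % q = t then monomial (m / q) (ψ a) else 0)
    (by simp)

theorem isCartierLinear_powContract {p : ℕ} [ExpChar R p] {e : ℕ} {ψ : R →+ R}
    (hψ : IsCartierLinear (p ^ e) ψ) (t : ℕ) :
    IsCartierLinear (p ^ e) (powContract (p ^ e) t ψ) := by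
  have hq : 0 < p ^ e := pow_pos (expChar_pos R p) e
  intro r f
  induction f using Polynomial.induction_on' with
  | add f g hf hg => rw [mul_add, map_add, map_add, hf, hg, mul_add]
  | monomial m c =>
    induction r using Polynomial.induction_on' with
    | add r₁ r₂ h₁ h₂ => rw [add_pow_expChar_pow, add_mul, map_add, h₁, h₂, add_mul]
    | monomial n d =>
      rw [Polynomial.monomial_pow, monomial_mul_monomial, powContract_monomial,
        powContract_monomial, Nat.mul_add_mod_self_right, mul_comm n, Nat.mul_add_div hq]
      split
      · rw [hψ, monomial_mul_monomial]
      · rw [mul_zero]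

end Polynomial

namespace HasFrobeniusDualBasis

variable {R : Type*} [CommRing R] {p : ℕ} [ExpChar R p] {e : ℕ}

theorem polynomial (h : HasFrobeniusDualBasis R (p ^ e)) : HasFrobeniusDualBasis R[X] (p ^ e) := by
  obtain ⟨ι, _, ψ, b, hψ, hb⟩ := h
  have hq : 0 < p ^ e := pow_pos (expChar_pos R p) e
  refine ⟨ι × Fin (p ^ e), inferInstance, fun it => powContract (p ^ e) it.2 (ψ it.1),
    fun it => monomial it.2 (b it.1), fun it => isCartierLinear_powContract (hψ it.1) _,
    fun f => ?_⟩
  induction f using Polynomial.induction_on' with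
  | add f g hf hg =>
    conv_lhs => rw [hf, hg]
    rw [← Finset.sum_add_distrib]
    refine Finset.sum_congr rfl fun it _ => ?_
    rw [map_add, add_pow_expChar_pow, add_mul]
  | monomial m c =>
    have hterm : ∀ i, ∑ t : Fin (p ^ e),
        powContract (p ^ e) t (ψ i) (monomial m c) ^ p ^ e * monomial t (b i) =
          monomial m (ψ i c ^ p ^ e * b i) := fun i => by
      rw [Fintype.sum_eq_single ⟨m % p ^ e, Nat.mod_lt _ hq⟩ fun t ht => ?_]
      · rw [powContract_monomial, if_pos rfl, Polynomial.monomial_pow, monomial_mul_monomial,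
          Nat.div_add_mod']
      · rw [powContract_monomial, if_neg fun h => ht (Fin.ext h.symm), zero_pow hq.ne',
          zero_mul]
    rw [Fintype.sum_prod_type, Finset.sum_congr rfl fun i _ => hterm i, ← map_sum,
      ← hb c]

theorem mvPolynomial (h : HasFrobeniusDualBasis R (p ^ e)) (n : ℕ) :
    HasFrobeniusDualBasis (MvPolynomial (Fin n) R) (p ^ e) := by
  induction n with
  | zero => exact h.of_ringEquiv (MvPolynomial.isEmptyRingEquiv R (Fin 0)).symm
  | succ m ih => exact ih.polynomial.of_ringEquiv (MvPolynomial.finSuccEquiv R m).toRingEquiv.symm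

end HasFrobeniusDualBasis

end Polynomial

section Localization

variable {P : Type*} [CommRing P] (M : Submonoid P) {S : Type*} [CommRing S]
  [Algebra P S] [IsLocalization M S] {q : ℕ}

theorem IsLocalization.exists_mul_pow_eq_algebraMap (hq : q ≠ 0) (t : S) :
    ∃ (g : P) (h : M), t * algebraMap P S h ^ q = algebraMap P S g := by
  obtain ⟨⟨g, h⟩, hgh⟩ := IsLocalization.surj M t
  refine ⟨g * h ^ (q - 1), h, ?_⟩
  rw [← Nat.succ_pred_eq_of_ne_zero hq, pow_succ', ← mul_assoc, hgh, map_mul, map_pow]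
  rfl

theorem IsCartierLinear.mk'_eq_of_mul_pow_eq {ψ : P →+ P} (hψ : IsCartierLinear q ψ)
    (hq : q ≠ 0) {t : S} {g g' : P} {h h' : M} (H : t * algebraMap P S h ^ q = algebraMap P S g)
    (H' : t * algebraMap P S h' ^ q = algebraMap P S g') :
    IsLocalization.mk' S (ψ g) h = IsLocalization.mk' S (ψ g') h' := by
  have : algebraMap P S (h' ^ q * g) = algebraMap P S (h ^ q * g') := by
    simp only [map_mul, map_pow, ← H, ← H']
    ring
  obtain ⟨c, hc⟩ := (IsLocalization.eq_iff_exists M S).1 this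
  -- after multiplying by `c ^ (q - 1)` both sides are `q`-th power multiples, so `ψ` applies
  have hc' : (c * h' : P) ^ q * g = (c * h) ^ q * g' := by
    obtain ⟨q', rfl⟩ : ∃ q', q = q' + 1 := ⟨q - 1, by omega⟩
    linear_combination (c : P) ^ q' * hc
  rw [IsLocalization.mk'_eq_iff_eq, IsLocalization.eq_iff_exists M S]
  exact ⟨c, by rw [← mul_assoc, ← mul_assoc, ← hψ, ← hψ, hc']⟩

theorem IsCartierLinear.exists_extension_of_isLocalization (hq : q ≠ 0) {ψ : P →+ P}
    (hψ : IsCartierLinear q ψ) :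
    ∃ Ψ : S →+ S, IsCartierLinear q Ψ ∧ ∀ (t : S) (g : P) (h : M),
      t * algebraMap P S h ^ q = algebraMap P S g →
        Ψ t * algebraMap P S h = algebraMap P S (ψ g) := by
  choose g h hgh using IsLocalization.exists_mul_pow_eq_algebraMap M (S := S) hq
  have hΨ : ∀ t g' (h' : M), t * algebraMap P S h' ^ q = algebraMap P S g' →
      IsLocalization.mk' S (ψ (g t)) (h t) = IsLocalization.mk' S (ψ g') h' :=
    fun t _ _ H => hψ.mk'_eq_of_mul_pow_eq M hq (hgh t) H
  refine ⟨AddMonoidHom.mk' (fun t => IsLocalization.mk' S (ψ (g t)) (h t)) fun t₁ t₂ => ?_,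
    fun r t => ?_, fun t g' h' H => ?_⟩
  · rw [hΨ (t₁ + t₂) (h t₂ ^ q * g t₁ + h t₁ ^ q * g t₂) (h t₁ * h t₂), map_add, hψ, hψ,
      mul_comm (h t₂ : P), mul_comm (h t₁ : P), IsLocalization.mk'_add]
    simp only [Submonoid.coe_mul, map_mul, map_add, map_pow, ← hgh]
    ring
  · have hr : r = IsLocalization.mk' S (g r) (h r ^ q) := by
      rw [IsLocalization.eq_mk'_iff_mul_eq, SubmonoidClass.coe_pow, map_pow, hgh]
    simp only [AddMonoidHom.mk'_apply]
    rw [hΨ (r ^ q * t) (g r ^ q * g t) (h r ^ q * h t), hψ, IsLocalization.mk'_mul, ← hr]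
    simp only [Submonoid.coe_mul, SubmonoidClass.coe_pow, map_mul, map_pow, ← hgh]
    ring
  · rw [AddMonoidHom.mk'_apply, hΨ t g' h' H, IsLocalization.mk'_spec]

end Localization

theorem HasFrobeniusDualBasis.of_isLocalization {P : Type*} [CommRing P] (M : Submonoid P)
    (S : Type*) [CommRing S] [Algebra P S] [IsLocalization M S] {q : ℕ} (hq : q ≠ 0)
    (hP : HasFrobeniusDualBasis P q) : HasFrobeniusDualBasis S q := by
  obtain ⟨ι, _, ψ, b, hψ, hb⟩ := hP
  choose Ψ hΨ hΨψ using fun i => (hψ i).exists_extension_of_isLocalization M (S := S) hq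
  refine ⟨ι, ‹_›, Ψ, fun i => algebraMap P S (b i), hΨ, fun x => ?_⟩
  obtain ⟨g, h, hx⟩ := IsLocalization.exists_mul_pow_eq_algebraMap M hq x
  apply ((IsLocalization.map_units S h).pow q).mul_right_cancel
  calc x * algebraMap P S h ^ q = algebraMap P S g := hx
    _ = ∑ i, algebraMap P S (ψ i g) ^ q * algebraMap P S (b i) := by
      conv_lhs => rw [hb g]
      simp only [map_sum, map_mul, map_pow]
    _ = ∑ i, (Ψ i x * algebraMap P S h) ^ q * algebraMap P S (b i) := by
      simp only [hΨψ _ x g h hx]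
    _ = (∑ i, Ψ i x ^ q * algebraMap P S (b i)) * algebraMap P S h ^ q := by
      rw [Finset.sum_mul]
      exact Finset.sum_congr rfl fun i _ => by ring

theorem Ideal.forall_mem_map_mk_iff {R : Type*} [CommRing R] {I b : Ideal R}
    {φ : R ⧸ I → R ⧸ I} {T : R → R}
    (hφ : ∀ x, φ (Ideal.Quotient.mk I x) = Ideal.Quotient.mk I (T x)) :
    (∀ y, φ y ∈ b.map (Ideal.Quotient.mk I)) ↔ ∀ x, T x ∈ b ⊔ I := by
  simp only [Ideal.Quotient.mk_surjective.forall, hφ, Ideal.mem_quotient_iff_mem_sup]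

theorem forall_mem_map_mk_pow_iff_mem_frobeniusPow {R : Type*} [CommRing R] {q : ℕ}
    (hR : HasFrobeniusDualBasis R q) {Tr : R →+ R} (hTr : IsCartierLinear q Tr)
    (hTrGen : ∀ ψ : R →+ R, IsCartierLinear q ψ → ∃ u, ∀ x, ψ x = Tr (u * x))
    {I b : Ideal R} {φ : R ⧸ I → R ⧸ I} {s : R} (l : ℕ)
    (hφ : ∀ x, φ (Ideal.Quotient.mk I x) = Ideal.Quotient.mk I (Tr (s * x))) :
    (∀ y, φ y ∈ b.map (Ideal.Quotient.mk I) ^ l) ↔ s ∈ (b ^ l ⊔ I).frobeniusPow q := by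
  simp only [← Ideal.map_pow]
  rw [Ideal.forall_mem_map_mk_iff hφ, mem_frobeniusPow_iff_forall_mul_mem hR hTr hTrGen]

theorem stmt13_general {k : Type*} [Field k] (p : ℕ) [Fact p.Prime] [CharP k p]
    (hk : (frobenius k p).Finite) (n : ℕ)
    (m0 : Ideal (MvPolynomial (Fin n) k))
    [m0.IsPrime] [CharP (Localization.AtPrime m0) p]
    (I : Ideal (Localization.AtPrime m0)) (e l : ℕ)
    (Tr : Localization.AtPrime m0 →+ Localization.AtPrime m0)
    (hTr : ∀ r x, Tr (r ^ p ^ e * x) = r * Tr x)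
    (hTrGen : ∀ ψ : Localization.AtPrime m0 →+ Localization.AtPrime m0,
      (∀ r x, ψ (r ^ p ^ e * x) = r * ψ x) → ∃ u, ∀ x, ψ x = Tr (u * x))
    -- `Fpow = I^{[pᵉ]}`, `J = J_e^𝒟`, `De = 𝒟_e`
    (Fpow : Ideal (Localization.AtPrime m0))
    (hFpow : Fpow = Ideal.span ((fun x => x ^ p ^ e) '' (I : Set (Localization.AtPrime m0))))
    (J : Ideal (Localization.AtPrime m0))
    (hJ1 : Fpow ≤ J)
    (De : Set ((Localization.AtPrime m0 ⧸ I) →+ (Localization.AtPrime m0 ⧸ I)))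
    (hDe : De = {φ | ∃ s ∈ J, ∀ x, φ (Ideal.Quotient.mk I x) = Ideal.Quotient.mk I (Tr (s * x))}) :
    ∀ φ ∈ De,
      ((∀ x, φ x ∈ ((IsLocalRing.maximalIdeal (Localization.AtPrime m0)).map
          (Ideal.Quotient.mk I)) ^ l) ↔
        ∃ s ∈ Ideal.span ((fun x => x ^ p ^ e) ''
              ((IsLocalRing.maximalIdeal (Localization.AtPrime m0) ^ l : Ideal _) :
                Set (Localization.AtPrime m0))) ⊓ J + Fpow,
          ∀ x, φ (Ideal.Quotient.mk I x) = Ideal.Quotient.mk I (Tr (s * x))) := by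
  have hR : HasFrobeniusDualBasis (Localization.AtPrime m0) (p ^ e) :=
    .of_isLocalization m0.primeCompl _ (pow_ne_zero _ (Fact.out : p.Prime).ne_zero)
      ((HasFrobeniusDualBasis.of_field hk e).mvPolynomial n)
  subst hDe hFpow
  rintro φ ⟨s₀, hs₀J, hφ⟩
  have hmem := fun s => forall_mem_map_mk_pow_iff_mem_frobeniusPow hR hTr hTrGen
    (b := IsLocalRing.maximalIdeal _) (φ := φ) (s := s) l
  rw [hmem s₀ hφ]
  constructor
  · intro hs₀
    refine ⟨s₀, ?_, hφ⟩
    rw [Ideal.frobeniusPow_sup] at hs₀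
    rw [Submodule.add_eq_sup, inf_comm, inf_sup_assoc_of_le _ hJ1]
    exact ⟨hs₀J, hs₀⟩
  · rintro ⟨s, hs, hφs⟩
    rw [← hmem s₀ hφ, hmem s hφs, Ideal.frobeniusPow_sup]
    rw [Submodule.add_eq_sup] at hs
    exact sup_le_sup_right (inf_le_left : _ ⊓ J ≤ _) _ hs

/-- Let `S = k[x₁,…,xₙ]_{(x₁,…,xₙ)}` with `k` `F`-finite of
characteristic `p`, `I ⊆ S` an ideal, `R = S/I`, `𝔪` the maximal ideal of `S`, and `𝒟` a
Cartier subalgebra with associated ideals `J_e^𝒟 ⊇ I^{[pᵉ]}` (so that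
`Ψ(J_e^𝒟/I^{[pᵉ]}) = 𝒟_e` under Fedder's isomorphism `Ψ(s̄) = Tr(s·-)‾`).  With
`𝒟_{e,l} = {φ ∈ 𝒟_e : φ(ᵉR) ⊆ 𝔪^l R}`, one has
`Ψ(((𝔪^l)^{[pᵉ]} ∩ J_e^𝒟 + I^{[pᵉ]})/I^{[pᵉ]}) = 𝒟_{e,l}`. -/
theorem stmt13 {k : Type*} [Field k] (p : ℕ) [Fact p.Prime] [CharP k p]
    (hk : (frobenius k p).Finite) (n : ℕ)
    (m0 : Ideal (MvPolynomial (Fin n) k))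
    (hm0 : m0 = Ideal.span (Set.range (MvPolynomial.X (R := k) (σ := Fin n))))
    [m0.IsPrime] [CharP (Localization.AtPrime m0) p]
    (I : Ideal (Localization.AtPrime m0)) (e l : ℕ)
    (Tr : Localization.AtPrime m0 →+ Localization.AtPrime m0)
    (hTr : ∀ r x, Tr (r ^ p ^ e * x) = r * Tr x)
    (hTrGen : ∀ ψ : Localization.AtPrime m0 →+ Localization.AtPrime m0,
      (∀ r x, ψ (r ^ p ^ e * x) = r * ψ x) → ∃ u, ∀ x, ψ x = Tr (u * x))
    -- `Fpow = I^{[pᵉ]}`, `J = J_e^𝒟`, `De = 𝒟_e`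
    (Fpow : Ideal (Localization.AtPrime m0))
    (hFpow : Fpow = Ideal.span ((fun x => x ^ p ^ e) '' (I : Set (Localization.AtPrime m0))))
    (J : Ideal (Localization.AtPrime m0))
    (hJ1 : Fpow ≤ J) (hJ2 : J ≤ Submodule.colon Fpow I)
    (De : Set ((Localization.AtPrime m0 ⧸ I) →+ (Localization.AtPrime m0 ⧸ I)))
    (hDe : De = {φ | ∃ s ∈ J, ∀ x, φ (Ideal.Quotient.mk I x) = Ideal.Quotient.mk I (Tr (s * x))}) :
    ∀ φ ∈ De,
      ((∀ x, φ x ∈ ((IsLocalRing.maximalIdeal (Localization.AtPrime m0)).map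
          (Ideal.Quotient.mk I)) ^ l) ↔
        ∃ s ∈ Ideal.span ((fun x => x ^ p ^ e) ''
              ((IsLocalRing.maximalIdeal (Localization.AtPrime m0) ^ l : Ideal _) :
                Set (Localization.AtPrime m0))) ⊓ J + Fpow,
          ∀ x, φ (Ideal.Quotient.mk I x) = Ideal.Quotient.mk I (Tr (s * x))) :=
  stmt13_general p hk n m0 I e l Tr hTr hTrGen Fpow hFpow J hJ1 De hDe
end
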